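/- Consider a POMDP with finite latent state space S, observation space O, and action a fixed. For a belief b ∈ Δ(S), let P_b(s,o) := b(s)·P(o|s) be the joint distribution of state and observation, P_b(o) := Σ_s P_b(s,o) the marginal, and let the updated belief after observing o be b^o(s') := Σ_s T(s'|s)·P_b(s|o), where T is a transition kernel and P_b(s|o) = P_b(s,o)/P_b(o). Then for any two beliefs b₁, b₂ on S, E_{o ∼ P_{b₁}(·)}[‖b₁^o − b₂^o‖₁] ≤ 2‖b₁ − b₂‖₁, where the expectation is taken over observations o in the common support (P_{b₁}(o) > 0 and P_{b₂}(o) > 0), where both updates are defined. -/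
import Mathlib


open Finset

/-- Expected contraction of the belief update: posterior conditioning on the
observation followed by pushing forward through the transition kernel. -/
theorem stmt2 {S O : Type*} [Fintype S] [Fintype O]
    (P : S → O → ℝ) (hP0 : ∀ s o, 0 ≤ P s o) (hP1 : ∀ s, ∑ o, P s o = 1)
    (T : S → S → ℝ) (hT0 : ∀ s s', 0 ≤ T s s') (hT1 : ∀ s, ∑ s', T s s' = 1)
    (b₁ b₂ : S → ℝ)
    (hb₁0 : ∀ s, 0 ≤ b₁ s) (hb₁1 : ∑ s, b₁ s = 1)
    (hb₂0 : ∀ s, 0 ≤ b₂ s) (hb₂1 : ∑ s, b₂ s = 1) :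
    -- marginal observation probability, posterior, and updated belief
    (fun (Pb : (S → ℝ) → O → ℝ) =>
      (fun (upd : (S → ℝ) → O → S → ℝ) =>
        ∑ o ∈ Finset.univ.filter (fun o : O => 0 < Pb b₁ o ∧ 0 < Pb b₂ o),
          Pb b₁ o * (∑ s', |upd b₁ o s' - upd b₂ o s'|)
            ≤ 2 * ∑ s, |b₁ s - b₂ s|)
      (fun b o s' => ∑ s, T s s' * (b s * P s o / Pb b o)))
    (fun b o => ∑ s, b s * P s o) := by
  simp only []
  set Q1 : O → ℝ := fun o => ∑ s, b₁ s * P s o with hQ1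
  set Q2 : O → ℝ := fun o => ∑ s, b₂ s * P s o with hQ2
  -- key pointwise bound for each observation in the filter
  have key : ∀ o ∈ Finset.univ.filter (fun o : O => 0 < Q1 o ∧ 0 < Q2 o),
      Q1 o * (∑ s', |(∑ s, T s s' * (b₁ s * P s o / Q1 o)) -
          (∑ s, T s s' * (b₂ s * P s o / Q2 o))|)
        ≤ (∑ s, |b₁ s - b₂ s| * P s o) + |Q2 o - Q1 o| := by
    intro o ho
    rw [Finset.mem_filter] at ho
    obtain ⟨-, h1, h2⟩ := ho
    set x : S → ℝ := fun s => b₁ s * P s o / Q1 o - b₂ s * P s o / Q2 o with hx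
    have hT : (∑ s', |(∑ s, T s s' * (b₁ s * P s o / Q1 o)) -
          (∑ s, T s s' * (b₂ s * P s o / Q2 o))|) ≤ ∑ s, |x s| := by
      have e1 : ∀ s' : S, |(∑ s, T s s' * (b₁ s * P s o / Q1 o)) -
          (∑ s, T s s' * (b₂ s * P s o / Q2 o))| = |∑ s, T s s' * x s| := by
        intro s'
        rw [← Finset.sum_sub_distrib]
        congr 1
        apply Finset.sum_congr rfl
        intro s _
        simp [hx]; ring
      calc (∑ s', |(∑ s, T s s' * (b₁ s * P s o / Q1 o)) -
          (∑ s, T s s' * (b₂ s * P s o / Q2 o))|)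
          = ∑ s', |∑ s, T s s' * x s| := by
            exact Finset.sum_congr rfl fun s' _ => e1 s'
        _ ≤ ∑ s', ∑ s, T s s' * |x s| := by
            apply Finset.sum_le_sum
            intro s' _
            refine (Finset.abs_sum_le_sum_abs _ _).trans ?_
            apply le_of_eq
            apply Finset.sum_congr rfl
            intro s _
            rw [abs_mul, abs_of_nonneg (hT0 s s')]
        _ = ∑ s, ∑ s', T s s' * |x s| := Finset.sum_comm
        _ = ∑ s, |x s| := by
            apply Finset.sum_congr rfl
            intro s _
            rw [← Finset.sum_mul, hT1, one_mul]
    have step : Q1 o * ∑ s, |x s| ≤ (∑ s, |b₁ s - b₂ s| * P s o) + |Q2 o - Q1 o| := by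
      rw [Finset.mul_sum]
      have hpt : ∀ s : S, Q1 o * |x s| ≤ |b₁ s - b₂ s| * P s o
          + b₂ s * P s o * |Q2 o - Q1 o| / Q2 o := by
        intro s
        have hQx : Q1 o * x s = (b₁ s * P s o - b₂ s * P s o)
            + b₂ s * P s o * (Q2 o - Q1 o) / Q2 o := by
          simp only [hx]
          field_simp
          ring
        have : Q1 o * |x s| = |Q1 o * x s| := by
          rw [abs_mul, abs_of_pos h1]
        rw [this, hQx]
        refine (abs_add_le _ _).trans ?_
        gcongr
        · rw [← sub_mul, abs_mul, abs_of_nonneg (hP0 s o)]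
        · rw [abs_div, abs_of_pos h2, abs_mul,
            abs_of_nonneg (mul_nonneg (hb₂0 s) (hP0 s o))]
      refine (Finset.sum_le_sum fun s _ => hpt s).trans ?_
      rw [Finset.sum_add_distrib]
      gcongr
      have e : (∑ s, b₂ s * P s o * |Q2 o - Q1 o| / Q2 o)
          = (∑ s, b₂ s * P s o) * |Q2 o - Q1 o| / Q2 o := by
        rw [Finset.sum_mul, Finset.sum_div]
      have e2 : (∑ s, b₂ s * P s o) = Q2 o := rfl
      rw [e, e2, mul_comm, mul_div_assoc, div_self (ne_of_gt h2), mul_one]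
    calc Q1 o * (∑ s', |(∑ s, T s s' * (b₁ s * P s o / Q1 o)) -
          (∑ s, T s s' * (b₂ s * P s o / Q2 o))|)
        ≤ Q1 o * ∑ s, |x s| := by
          exact mul_le_mul_of_nonneg_left hT (le_of_lt h1)
      _ ≤ _ := step
  refine (Finset.sum_le_sum key).trans ?_
  have ext : (∑ o ∈ Finset.univ.filter (fun o : O => 0 < Q1 o ∧ 0 < Q2 o),
      ((∑ s, |b₁ s - b₂ s| * P s o) + |Q2 o - Q1 o|))
      ≤ ∑ o, ((∑ s, |b₁ s - b₂ s| * P s o) + |Q2 o - Q1 o|) := by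
    apply Finset.sum_le_sum_of_subset_of_nonneg (Finset.filter_subset _ _)
    intro o _ _
    have : 0 ≤ ∑ s, |b₁ s - b₂ s| * P s o :=
      Finset.sum_nonneg fun s _ => mul_nonneg (abs_nonneg _) (hP0 s o)
    positivity
  refine ext.trans ?_
  rw [Finset.sum_add_distrib]
  have hA : (∑ o, ∑ s, |b₁ s - b₂ s| * P s o) = ∑ s, |b₁ s - b₂ s| := by
    rw [Finset.sum_comm]
    apply Finset.sum_congr rfl
    intro s _
    rw [← Finset.mul_sum, hP1, mul_one]
  have hB : (∑ o, |Q2 o - Q1 o|) ≤ ∑ s, |b₁ s - b₂ s| := by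
    calc (∑ o, |Q2 o - Q1 o|) ≤ ∑ o, ∑ s, |b₁ s - b₂ s| * P s o := by
          apply Finset.sum_le_sum
          intro o _
          simp only [hQ1, hQ2]
          rw [← Finset.sum_sub_distrib]
          refine (Finset.abs_sum_le_sum_abs _ _).trans ?_
          apply Finset.sum_le_sum
          intro s _
          rw [← sub_mul, abs_mul, abs_of_nonneg (hP0 s o), abs_sub_comm]
      _ = ∑ s, |b₁ s - b₂ s| := hA
  rw [hA]
  linarith
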